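/- Round-trip of the MB/4D' type translation, direction 2: for any 4D' type τ, ⌊⌈τ⌉⌋ ≡ τ, and for any 4D' meta-continuation type σ_α with answer type α, translating the pair (σ_α, α) to an MB annotation and back yields (σ_α, α). -/
import Mathlib


namespace MBRT2

/- MB types and annotations for λ_{S₀} (extended monomorphic
   Materzok–Biernacki system: arrow types carry a non-empty annotation
   [t1 s1] t2 s2 for the function body). -/
mutual
inductive MTy : Type
  | nat : MTy
  | arr : MTy → MTy → MTy → MAnn → MTy → MAnn → MTy
inductive MAnn : Type
  | eps : MAnn
  | ann : MTy → MAnn → MTy → MAnn → MAnn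
end

/- 4D' types: the trail-free 4D type system for shift0/reset0, with
   defunctionalized (pair-list) meta-continuation types
   σ ::= •σ | (τ1 ⟨σ1⟩ τ2) :: σ. -/
mutual
inductive PTy : Type
  | nat : PTy
  | arr : PTy → PTy → PM → PTy → PM → PTy → PTy
inductive PM : Type
  | empty : PM
  | cons : PTy → PM → PTy → PM → PM
end

/- The translation ⌊·⌋ from MB types and annotations to 4D' types and
   (meta-continuation type, answer type) pairs. -/
mutual
def toP : MTy → PTy
  | .nat => .nat
  | .arr a b t1 s1 t2 s2 =>
      .arr (toP a) (toP b) (toPM t1 s1) (toPA t1 s1) (toPM t2 s2) (toPA t2 s2)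
  termination_by τ => sizeOf τ
  decreasing_by all_goals (simp_wf <;> omega)
def toPM : MTy → MAnn → PM
  | _, .eps => .empty
  | τ, .ann ta sa tb sb => .cons (toP τ) (toPM ta sa) (toPA ta sa) (toPM tb sb)
  termination_by τ σ => sizeOf τ + sizeOf σ
  decreasing_by all_goals (simp_wf <;> omega)
def toPA : MTy → MAnn → PTy
  | τ, .eps => toP τ
  | _, .ann _ _ tb sb => toPA tb sb
  termination_by τ σ => sizeOf τ + sizeOf σ
  decreasing_by all_goals (simp_wf <;> omega)
end

/- The inverse translation ⌈·⌉ from 4D' types and (meta-continuation type,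
   answer type) pairs back to MB types and annotations. -/
mutual
def fromP : PTy → MTy
  | .nat => .nat
  | .arr a b m1 a1 m2 a2 =>
      .arr (fromP a) (fromP b) (fromPT m1 a1) (fromPA m1 a1) (fromPT m2 a2) (fromPA m2 a2)
  termination_by τ => sizeOf τ
  decreasing_by all_goals (simp_wf <;> omega)
def fromPT : PM → PTy → MTy
  | .empty, α => fromP α
  | .cons t1 _ _ _, _ => fromP t1
  termination_by σ α => sizeOf σ + sizeOf α
  decreasing_by all_goals (simp_wf <;> omega)
def fromPA : PM → PTy → MAnn
  | .empty, _ => .eps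
  | .cons _ σ1 t2 rest, α => .ann (fromPT σ1 t2) (fromPA σ1 t2) (fromPT rest α) (fromPA rest α)
  termination_by σ α => sizeOf σ + sizeOf α
  decreasing_by all_goals (simp_wf <;> omega)
end

theorem aux : ∀ n : ℕ,
    (∀ τ : PTy, sizeOf τ ≤ n → toP (fromP τ) = τ) ∧
    (∀ (σα : PM) (α : PTy), sizeOf σα + sizeOf α ≤ n →
      toPM (fromPT σα α) (fromPA σα α) = σα ∧ toPA (fromPT σα α) (fromPA σα α) = α) := by
  intro n
  induction n using Nat.strong_induction_on with
  | _ n ih =>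
    constructor
    · intro τ hτ
      match τ with
      | .nat => simp [fromP, toP]
      | .arr a b m1 a1 m2 a2 =>
        have h : sizeOf (PTy.arr a b m1 a1 m2 a2) = 1 + sizeOf a + sizeOf b + sizeOf m1 + sizeOf a1 + sizeOf m2 + sizeOf a2 := by simp
        rw [h] at hτ
        have ha := (ih (n-1) (by omega)).1 a (by omega)
        have hb := (ih (n-1) (by omega)).1 b (by omega)
        have h1 := (ih (n-1) (by omega)).2 m1 a1 (by omega)
        have h2 := (ih (n-1) (by omega)).2 m2 a2 (by omega)
        simp [fromP, toP, ha, hb, h1.1, h1.2, h2.1, h2.2]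
    · intro σα α hσ
      match σα with
      | .empty =>
        have h : sizeOf (PM.empty) = 1 := by simp
        rw [h] at hσ
        have hα := (ih (n-1) (by omega)).1 α (by omega)
        simp [fromPT, fromPA, toPM, toPA, hα]
      | .cons t1 σ1 t2 rest =>
        have h : sizeOf (PM.cons t1 σ1 t2 rest) = 1 + sizeOf t1 + sizeOf σ1 + sizeOf t2 + sizeOf rest := by simp
        rw [h] at hσ
        have hα : (0:ℕ) < sizeOf α := by cases α <;> simp
        have ht1 := (ih (n-1) (by omega)).1 t1 (by omega)
        have h1 := (ih (n-1) (by omega)).2 σ1 t2 (by omega)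
        have h2 := (ih (n-1) (by omega)).2 rest α (by omega)
        simp [fromPT, fromPA, toPM, toPA, ht1, h1.1, h1.2, h2.1, h2.2]

/-- Round-trip of the MB/4D' type translation, direction 2: for any 4D' type
    τ, ⌊⌈τ⌉⌋ ≡ τ, and for any 4D' meta-continuation type σα with answer type
    α, translating the pair (σα, α) to an MB (type, annotation) pair and back
    yields (σα, α). -/
theorem mb_roundtrip_two :
    (∀ τ : PTy, toP (fromP τ) = τ) ∧
    (∀ (σα : PM) (α : PTy),
      (toPM (fromPT σα α) (fromPA σα α), toPA (fromPT σα α) (fromPA σα α)) = (σα, α)) := by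
  constructor
  · intro τ; exact (aux (sizeOf τ)).1 τ le_rfl
  · intro σα α
    have := (aux (sizeOf σα + sizeOf α)).2 σα α le_rfl
    simp [this.1, this.2]

end MBRT2
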